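/- Suppose m = T^k(n) for some k, m ≡ 2 (mod 3), and (2m−1)/3 < n. Then the trajectory of n under T meets the trajectory of a positive integer strictly smaller than n; explicitly, T^{k}(n) = T((2m−1)/3) with (2m−1)/3 < n. -/

import Mathlib

/-- The modified Collatz function. -/
def T (n : ℕ) : ℕ := if n % 2 = 0 then n / 2 else (3 * n + 1) / 2

theorem T_of_odd {n : ℕ} (h : n % 2 = 1) : T n = (3 * n + 1) / 2 := by
  simp [T, h]

-- `3 * p = 2 * m - 1` is odd, so `p` is odd and `T` takes its `(3p + 1)/2` branch.
theorem T_eq_of_three_mul_eq {m p : ℕ} (hm : 0 < m) (hp : 3 * p = 2 * m - 1) : T p = m := by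
  have hodd : p % 2 = 1 := by omega
  rw [T_of_odd hodd]
  omega

theorem path_merging_sieve_general (n k m : ℕ)
    (hm : m = T^[k] n) (h3 : m % 3 = 2) (hlt : 2 * m - 1 < 3 * n) :
    ∃ p : ℕ, 0 < p ∧ 3 * p = 2 * m - 1 ∧ p < n ∧ T p = T^[k] n := by
  have hp : 3 * ((2 * m - 1) / 3) = 2 * m - 1 := by omega
  refine ⟨(2 * m - 1) / 3, by omega, hp, by omega, ?_⟩
  rw [← hm]
  exact T_eq_of_three_mul_eq (by omega) hp

theorem path_merging_sieve (n k m : ℕ) (hn : 1 ≤ n)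
    (hm : m = T^[k] n) (h3 : m % 3 = 2) (hlt : 2 * m - 1 < 3 * n) :
    ∃ p : ℕ, 0 < p ∧ 3 * p = 2 * m - 1 ∧ p < n ∧ T p = T^[k] n :=
  path_merging_sieve_general n k m hm h3 hlt
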